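/- arXiv:2011.01201 — 2 statements merged into one kernel-verified Lean document; each statement's English description precedes it below -/
import Mathlib

section
/- Let H be a symmetric n×n real matrix, g ∈ ℝⁿ, σ the minimum eigenvalue of H, ε_R > 0, and let p solve (H + (|σ| + ε_R)I) p = -g. If ‖H‖ ≤ U_H, then gᵀp ≤ -(2U_H + ε_R)⁻¹·‖g‖². -/
open scoped Matrix RealInnerProductSpace

/-!
In an eigenbasis of `H`, the matrix `H + (|σ| + εR) I` is diagonal with entries
`μᵢ = λᵢ + |σ| + εR`, and these lie in `(0, 2 U_H + εR]` because every `|λᵢ| ≤ ‖H‖ ≤ U_H`.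
For an operator `T` that is diagonal in an orthonormal basis with entries in `[0, c]`,
`‖T x‖² = ∑ μᵢ² xᵢ² ≤ c ∑ μᵢ xᵢ² = c ⟪T x, x⟫`; taking `x = p`, so that `T p = -g`,
gives `‖g‖² ≤ -c ⟪g, p⟫`.
-/

theorem OrthonormalBasis.norm_apply_sq_le_mul_inner_apply {ι E : Type*} [Fintype ι]
    [NormedAddCommGroup E] [InnerProductSpace ℝ E] (b : OrthonormalBasis ι ℝ E)
    {T : E →ₗ[ℝ] E} {μ : ι → ℝ} (hT : ∀ i, T (b i) = μ i • b i) {c : ℝ}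
    (hμ₀ : ∀ i, 0 ≤ μ i) (hμc : ∀ i, μ i ≤ c) (x : E) :
    ‖T x‖ ^ 2 ≤ c * ⟪T x, x⟫ := by
  have hcoord : ∀ i, ⟪b i, T x⟫ = μ i * ⟪b i, x⟫ := fun i => by
    conv_lhs => rw [← b.sum_repr' x]
    simp only [map_sum, map_smul, hT, smul_smul, b.orthonormal.inner_right_fintype]
    ring
  rw [← b.sum_sq_norm_inner_right, ← b.sum_inner_mul_inner, Finset.mul_sum]
  refine Finset.sum_le_sum fun i _ => ?_
  rw [real_inner_comm (b i), hcoord, Real.norm_eq_abs, sq_abs]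
  nlinarith [mul_nonneg (mul_nonneg (hμ₀ i) (sub_nonneg.2 (hμc i))) (sq_nonneg ⟪b i, x⟫)]

theorem Matrix.IsHermitian.abs_eigenvalues_le_norm_toEuclideanCLM {n : Type*} [Fintype n]
    [DecidableEq n] {H : Matrix n n ℝ} (hH : H.IsHermitian) (i : n) :
    |hH.eigenvalues i| ≤ ‖Matrix.toEuclideanCLM (𝕜 := ℝ) H‖ := by
  have : Nonempty n := ⟨i⟩
  have hmem : hH.eigenvalues i ∈ spectrum ℝ (Matrix.toEuclideanCLM (𝕜 := ℝ) H) := by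
    rw [AlgEquiv.spectrum_eq]
    exact hH.eigenvalues_mem_spectrum_real i
  exact spectrum.norm_le_norm_of_mem hmem

theorem Matrix.IsHermitian.toEuclideanLin_add_smul_one_eigenvectorBasis {n : Type*} [Fintype n]
    [DecidableEq n] {H : Matrix n n ℝ} (hH : H.IsHermitian) (a : ℝ) (i : n) :
    Matrix.toEuclideanLin (H + a • 1) (hH.eigenvectorBasis i) =
      (hH.eigenvalues i + a) • hH.eigenvectorBasis i := by
  ext j
  simp [hH.mulVec_eigenvectorBasis, add_mul]

theorem abs_ciInf_le_of_forall_abs_le {ι : Type*} [Nonempty ι] [Finite ι] {f : ι → ℝ} {U : ℝ}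
    (h : ∀ i, |f i| ≤ U) : |⨅ i, f i| ≤ U := by
  obtain ⟨j, hj⟩ := exists_eq_ciInf_of_finite (f := f)
  exact hj ▸ h j

theorem stmt_3_general (n : ℕ) (H : Matrix (Fin n) (Fin n) ℝ)
    (hH : H.IsHermitian) (U_H : ℝ)
    (hnorm : ‖Matrix.toEuclideanCLM (𝕜 := ℝ) H‖ ≤ U_H)
    (σ : ℝ) (hσ : σ = ⨅ i, hH.eigenvalues i)
    (εR : ℝ) (hεR : 0 < εR)
    (g p : EuclideanSpace ℝ (Fin n))
    (hp : Matrix.toEuclideanLin (H + (|σ| + εR) • (1 : Matrix (Fin n) (Fin n) ℝ)) p = -g) :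
    ⟪g, p⟫ ≤ -(2 * U_H + εR)⁻¹ * ‖g‖ ^ 2 := by
  have heig i : |hH.eigenvalues i| ≤ U_H :=
    (hH.abs_eigenvalues_le_norm_toEuclideanCLM i).trans hnorm
  have hσ_le i : σ ≤ hH.eigenvalues i := hσ ▸ ciInf_le (Set.finite_range _).bddBelow i
  have hσ_abs (i : Fin n) : |σ| ≤ U_H := by
    have : Nonempty (Fin n) := ⟨i⟩
    exact hσ ▸ abs_ciInf_le_of_forall_abs_le heig
  have hsq := hH.eigenvectorBasis.norm_apply_sq_le_mul_inner_apply
    (hH.toEuclideanLin_add_smul_one_eigenvectorBasis (|σ| + εR)) (c := 2 * U_H + εR)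
    (fun i => by linarith [neg_abs_le σ, hσ_le i])
    (fun i => by linarith [le_abs_self (hH.eigenvalues i), heig i, hσ_abs i]) p
  rw [hp, norm_neg, inner_neg_left] at hsq
  have hc : 0 < 2 * U_H + εR := by linarith [(norm_nonneg _).trans hnorm]
  rw [neg_mul, le_neg, inv_mul_le_iff₀ hc]
  linarith

/-- Descent property of the regularized Newton direction. -/
theorem stmt_3 (n : ℕ) (hn : 0 < n) (H : Matrix (Fin n) (Fin n) ℝ)
    (hH : H.IsHermitian) (U_H : ℝ)
    (hnorm : ‖Matrix.toEuclideanCLM (𝕜 := ℝ) H‖ ≤ U_H)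
    (σ : ℝ) (hσ : σ = ⨅ i, hH.eigenvalues i)
    (εR : ℝ) (hεR : 0 < εR)
    (g p : EuclideanSpace ℝ (Fin n))
    (hp : Matrix.toEuclideanLin (H + (|σ| + εR) • (1 : Matrix (Fin n) (Fin n) ℝ)) p = -g) :
    ⟪g, p⟫ ≤ -(2 * U_H + εR)⁻¹ * ‖g‖ ^ 2 :=
  stmt_3_general n H hH U_H hnorm σ hσ εR hεR g p hp
end

section
/- Let φ : ℝ → ℝ be twice continuously differentiable, δ₂ ∈ (0,1), and suppose s > 0 satisfies φ'(s) ≥ δ₂·(φ'(0) + (1/2)·min{φ''(0),0}·s). Then there exists t ∈ (0, s) such that s·(φ''(t) + (δ₂/2)·max{-φ''(0), 0}) ≥ -(1-δ₂)·φ'(0). -/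
/-- Mean-value-theorem step used to lower-bound the stepsize accepted by the
curvature condition of a curvilinear linesearch. -/
theorem stmt_9 (φ : ℝ → ℝ) (hφ : ContDiff ℝ 2 φ)
    (δ₂ : ℝ) (hδ₂ : δ₂ ∈ Set.Ioo (0:ℝ) 1) (s : ℝ) (hs : 0 < s)
    (hcurv : deriv φ s ≥ δ₂ * (deriv φ 0 + (1/2) * min (deriv (deriv φ) 0) 0 * s)) :
    ∃ t ∈ Set.Ioo 0 s,
      s * (deriv (deriv φ) t + (δ₂ / 2) * max (-(deriv (deriv φ) 0)) 0)
        ≥ -(1 - δ₂) * deriv φ 0 := by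
  have hd : Differentiable ℝ (deriv φ) := ((contDiff_succ_iff_deriv.mp (show ContDiff ℝ (1+1) φ by norm_num [hφ])).2.2).differentiable one_ne_zero
  obtain ⟨t, ht, heq⟩ := exists_deriv_eq_slope (deriv φ) hs
    (hd.continuous.continuousOn) (hd.differentiableOn)
  refine ⟨t, ht, ?_⟩
  have h1 : deriv (deriv φ) t * (s - 0) = deriv φ s - deriv φ 0 := by
    field_simp at heq; rw [heq, sub_zero, div_mul_cancel₀ _ hs.ne']
  have hmin : min (deriv (deriv φ) 0) 0 = -max (-(deriv (deriv φ) 0)) 0 := by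
    rw [← min_neg_neg, neg_neg]; simp
  rw [hmin] at hcurv
  nlinarith [hδ₂.1, hδ₂.2]
end
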